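/- Lack of consistency of IW-SAA for α-unimodality: for any positive sampling probability density g on 𝒳, almost surely there exists N_0 ∈ ℕ such that val(P_{α,n}) = 1 for all n ≥ N_0. Since val(P_α) ≤ (2^α − 1)/2^α < 1, the IW-SAA optimal value val(P_{α,n}) does not converge to val(P_α). -/

import Mathlib

/-!
For the population problem, `α`-unimodality compares `f` with its rescaling `y ↦ f (y / 2)`: the
quarter disc of radius `1` carries at least the fraction `2^{-α}` of the mass of `𝒳`, so `S`
carries at most `1 - 2^{-α}`.

For the sample problem, almost surely no two samples are collinear with the origin. A shape
function supported on the rays through the samples that lie in `S` then vanishes at all other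
samples, so both empirical averages only see the samples in `S`, and rescaling makes them equal
to `1`. Along the rays one takes `‖x‖^{α-2}` if `α < 2` (any positive multiple is admissible) and
the constant `M` if `α ≥ 2`; in the latter case rescaling may only decrease the function, and the
strong law of large numbers supplies enough sampled mass, as `M |S| = 3πM/4 > 1`.
-/

open MeasureTheory Filter Set

noncomputable section

namespace AlphaUnimodalDRO

/-- The domain `𝒳 = {x ∈ ℝ² : x ≥ 0, ‖x‖ ≤ 2}` (Euclidean norm). -/
def domX : Set (EuclideanSpace ℝ (Fin 2)) := {x | (∀ i, 0 ≤ x i) ∧ ‖x‖ ≤ 2}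

/-- The target region `S = {x ∈ ℝ² : x ≥ 0, 1 ≤ ‖x‖ ≤ 2}`. -/
def Sreg : Set (EuclideanSpace ℝ (Fin 2)) := {x | (∀ i, 0 ≤ x i) ∧ 1 ≤ ‖x‖ ∧ ‖x‖ ≤ 2}

/-- `f` is `α`-unimodal about `(0,0)` on `𝒳`. -/
def AlphaUnimodal (α : ℝ) (f : EuclideanSpace ℝ (Fin 2) → ℝ) : Prop :=
  ∀ x : EuclideanSpace ℝ (Fin 2), x ≠ 0 → ∀ s t : ℝ, 0 < s → s ≤ t →
    s • x ∈ domX → t • x ∈ domX →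
    t ^ (2 - α) * f (t • x) ≤ s ^ (2 - α) * f (s • x)

/-- The `α`-unimodal shape class: nonnegative `α`-unimodal functions on `𝒳`,
additionally bounded by `M` in the case `α ≥ 2`. -/
def Fclass (α M : ℝ) : Set (EuclideanSpace ℝ (Fin 2) → ℝ) :=
  {f | Measurable f ∧ (∀ x ∈ domX, 0 ≤ f x) ∧ AlphaUnimodal α f ∧
    (2 ≤ α → ∀ x ∈ domX, f x ≤ M)}

/-- The optimal value `val(P_α)` of the `α`-unimodal distributional
optimization problem. -/
def valPα (α M : ℝ) : ℝ :=
  sSup {r : ℝ | ∃ f ∈ Fclass α M, (∫ x in domX, f x) = 1 ∧ r = ∫ x in Sreg, f x}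

/-- The optimal value `val(P_{α,n})` of the IW-SAA problem with sampling
density `g`, built from the samples `X 0, …, X (n-1)`. -/
def valPαn (α M : ℝ) (g : EuclideanSpace ℝ (Fin 2) → ℝ) {Ω : Type*}
    (X : ℕ → Ω → EuclideanSpace ℝ (Fin 2)) (n : ℕ) (ω : Ω) : ℝ :=
  sSup {r : ℝ | ∃ L ∈ (fun f => fun x => f x / g x) '' Fclass α M,
    (1 / n : ℝ) * ∑ i ∈ Finset.range n, Set.indicator domX L (X i ω) = 1 ∧
    r = (1 / n : ℝ) * ∑ i ∈ Finset.range n, Set.indicator Sreg L (X i ω)}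

open ProbabilityTheory Topology
open scoped Pointwise

local notation "ℝ²" => EuclideanSpace ℝ (Fin 2)

lemma measurableSet_domX : MeasurableSet domX := by
  unfold domX; measurability

lemma measurableSet_Sreg : MeasurableSet Sreg := by
  unfold Sreg; measurability

lemma Sreg_subset_domX : Sreg ⊆ domX := fun _ hx => ⟨hx.1, hx.2.2⟩

lemma zero_notMem_Sreg : (0 : ℝ²) ∉ Sreg := fun h => by
  norm_num [Sreg] at h

def cross : ℝ² →ₗ[ℝ] ℝ² →ₗ[ℝ] ℝ :=
  LinearMap.mk₂ ℝ (fun x y => x 0 * y 1 - x 1 * y 0)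
    (fun _ _ _ => by simp only [PiLp.add_apply]; ring)
    (fun _ _ _ => by simp only [PiLp.smul_apply, smul_eq_mul]; ring)
    (fun _ _ _ => by simp only [PiLp.add_apply]; ring)
    (fun _ _ _ => by simp only [PiLp.smul_apply, smul_eq_mul]; ring)

lemma cross_apply (x y : ℝ²) : cross x y = x 0 * y 1 - x 1 * y 0 := rfl

lemma cross_self_smul (x : ℝ²) (t : ℝ) : cross x (t • x) = 0 := by
  rw [map_smul, cross_apply, smul_eq_mul]; ring

lemma measurable_cross : Measurable fun p : ℝ² × ℝ² => cross p.1 p.2 := by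
  simp only [cross_apply]; fun_prop

lemma volume_setOf_cross_eq_zero {x : ℝ²} (hx : x ≠ 0) :
    volume {y | cross x y = 0} = 0 := by
  refine Measure.addHaar_submodule volume (LinearMap.ker (cross x)) fun h => hx ?_
  have h0 := LinearMap.ker_eq_top.mp h
  ext i
  fin_cases i
  · simpa [cross_apply] using LinearMap.congr_fun h0 (EuclideanSpace.single 1 1)
  · simpa [cross_apply] using LinearMap.congr_fun h0 (EuclideanSpace.single 0 1)

lemma ae_cross_ne_zero_of_indepFun {Ω : Type*} [MeasurableSpace Ω] {P : Measure Ω}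
    [IsFiniteMeasure P] {Y Z : Ω → ℝ²} (hY : Measurable Y) (hZ : Measurable Z)
    (hYZ : IndepFun Y Z P) (hY_ac : P.map Y ≪ volume) (hZ_ac : P.map Z ≪ volume) :
    ∀ᵐ ω ∂P, cross (Y ω) (Z ω) ≠ 0 := by
  have hmeas : MeasurableSet {p : ℝ² × ℝ² | cross p.1 p.2 ≠ 0} :=
    (measurableSet_singleton 0).compl.preimage measurable_cross
  have hprod : ∀ᵐ p ∂(P.map Y).prod (P.map Z), cross p.1 p.2 ≠ 0 := by
    refine (Measure.ae_prod_mem_iff_ae_ae_mem hmeas).mpr ?_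
    filter_upwards [hY_ac.ae_le (Measure.ae_ne volume 0)] with x hx
    exact measure_mono_null (fun y hy => not_not.mp hy) (hZ_ac (volume_setOf_cross_eq_zero hx))
  rw [← (indepFun_iff_map_prod_eq_prod_map_map hY.aemeasurable hZ.aemeasurable).mp hYZ] at hprod
  exact ae_of_ae_map (hY.prodMk hZ).aemeasurable hprod

lemma smul_mem_Ioi_smul_iff {E : Type*} [AddCommGroup E] [Module ℝ E] {s : Set E} {t : ℝ}
    (ht : 0 < t) (z : E) : t • z ∈ Ioi (0 : ℝ) • s ↔ z ∈ Ioi (0 : ℝ) • s := by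
  simp only [Set.mem_smul, Set.mem_Ioi]
  constructor
  · rintro ⟨r, hr, a, ha, h⟩
    exact ⟨t⁻¹ * r, by positivity, a, ha, by rw [mul_smul, h, inv_smul_smul₀ ht.ne']⟩
  · rintro ⟨r, hr, a, ha, rfl⟩
    exact ⟨t * r, by positivity, a, ha, mul_smul _ _ _⟩

lemma measurableSet_Ioi_smul_of_finite {E : Type*} [NormedAddCommGroup E] [NormedSpace ℝ E]
    [MeasurableSpace E] [BorelSpace E] {s : Set E} (hs : s.Finite) (h0 : (0 : E) ∉ s) :
    MeasurableSet (Ioi (0 : ℝ) • s) := by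
  rw [← Set.image2_smul, ← Set.iUnion_image_right]
  refine hs.measurableSet_biUnion fun a ha => ?_
  exact (isClosedEmbedding_smul_left (ne_of_mem_of_not_mem ha h0)).measurableEmbedding
    |>.measurableSet_image.mpr measurableSet_Ioi

section ShapeClass

variable {α M : ℝ} {f : ℝ² → ℝ}

lemma AlphaUnimodal.indicator {C : Set ℝ²}
    (hC : ∀ t : ℝ, 0 < t → ∀ z, t • z ∈ C ↔ z ∈ C) (hf : AlphaUnimodal α f) :
    AlphaUnimodal α (C.indicator f) := by
  intro x hx s t hs hst hsx htx
  by_cases hxC : x ∈ C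
  · rw [indicator_of_mem ((hC t (hs.trans_le hst) x).mpr hxC),
      indicator_of_mem ((hC s hs x).mpr hxC)]
    exact hf x hx s t hs hst hsx htx
  · rw [indicator_of_notMem (fun h => hxC ((hC t (hs.trans_le hst) x).mp h)),
      indicator_of_notMem (fun h => hxC ((hC s hs x).mp h)), mul_zero, mul_zero]

lemma indicator_mem_Fclass {C : Set ℝ²} (hCm : MeasurableSet C)
    (hC : ∀ t : ℝ, 0 < t → ∀ z, t • z ∈ C ↔ z ∈ C) (hf : f ∈ Fclass α M) :
    C.indicator f ∈ Fclass α M := by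
  obtain ⟨hmeas, hnonneg, huni, hbdd⟩ := hf
  refine ⟨hmeas.indicator hCm, fun x hx => ?_, huni.indicator hC, fun hα x hx => ?_⟩
  · by_cases hxC : x ∈ C
    · simpa [indicator_of_mem hxC] using hnonneg x hx
    · simp [indicator_of_notMem hxC]
  · by_cases hxC : x ∈ C
    · simpa [indicator_of_mem hxC] using hbdd hα x hx
    · simpa [indicator_of_notMem hxC] using (hnonneg x hx).trans (hbdd hα x hx)

lemma const_mul_mem_Fclass (hf : f ∈ Fclass α M) {c : ℝ} (hc : 0 ≤ c) (hc1 : 2 ≤ α → c ≤ 1) :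
    (fun x => c * f x) ∈ Fclass α M := by
  obtain ⟨hmeas, hnonneg, huni, hbdd⟩ := hf
  refine ⟨hmeas.const_mul c, fun x hx => mul_nonneg hc (hnonneg x hx), ?_, fun hα x hx => ?_⟩
  · intro x hx s t hs hst hsx htx
    rw [mul_left_comm, mul_left_comm (s ^ _)]
    exact mul_le_mul_of_nonneg_left (huni x hx s t hs hst hsx htx) hc
  · exact (mul_le_of_le_one_left (hnonneg x hx) (hc1 hα)).trans (hbdd hα x hx)

lemma rpow_norm_mem_Fclass (hα : α < 2) : (fun x => ‖x‖ ^ (α - 2)) ∈ Fclass α M := by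
  refine ⟨by fun_prop, fun x _ => by positivity, ?_, fun h => absurd h hα.not_ge⟩
  intro x _ s t hs hst _ _
  have key : ∀ r : ℝ, 0 < r → r ^ (2 - α) * ‖r • x‖ ^ (α - 2) = ‖x‖ ^ (α - 2) := by
    intro r hr
    rw [norm_smul, Real.norm_of_nonneg hr.le, Real.mul_rpow hr.le (norm_nonneg x), ← mul_assoc,
      ← Real.rpow_add hr, add_comm, sub_add_sub_cancel, sub_self, Real.rpow_zero, one_mul]
  rw [key t (hs.trans_le hst), key s hs]

lemma const_mem_Fclass (hα : 2 ≤ α) (hM : 0 ≤ M) : (fun _ => M) ∈ Fclass α M :=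
  ⟨measurable_const, fun _ _ => hM,
    fun _ _ s t hs hst _ _ => mul_le_mul_of_nonneg_right
      (Real.rpow_le_rpow_of_nonpos hs hst (by linarith)) hM,
    fun _ _ _ => le_rfl⟩

end ShapeClass

section SampleProblem

variable {α M : ℝ} {g : ℝ² → ℝ} {x : ℕ → ℝ²} {n : ℕ}

def sampleValues (α M : ℝ) (g : ℝ² → ℝ) (x : ℕ → ℝ²) (n : ℕ) : Set ℝ :=
  {r : ℝ | ∃ L ∈ (fun f => fun x => f x / g x) '' Fclass α M,
    (1 / n : ℝ) * ∑ i ∈ Finset.range n, Set.indicator domX L (x i) = 1 ∧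
    r = (1 / n : ℝ) * ∑ i ∈ Finset.range n, Set.indicator Sreg L (x i)}

lemma valPαn_eq_sSup_sampleValues {Ω : Type*} (X : ℕ → Ω → ℝ²) (n : ℕ) (ω : Ω) :
    valPαn α M g X n ω = sSup (sampleValues α M g (fun i => X i ω) n) := rfl

lemma le_one_of_mem_sampleValues (hg_pos : ∀ y ∈ domX, 0 < g y) {r : ℝ}
    (hr : r ∈ sampleValues α M g x n) : r ≤ 1 := by
  obtain ⟨_, ⟨f, hf, rfl⟩, hdom, rfl⟩ := hr
  refine le_of_le_of_eq (mul_le_mul_of_nonneg_left (Finset.sum_le_sum fun i _ => ?_)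
    (by positivity)) hdom
  by_cases hS : x i ∈ Sreg
  · rw [indicator_of_mem hS, indicator_of_mem (Sreg_subset_domX hS)]
  · rw [indicator_of_notMem hS]
    exact indicator_nonneg (fun y hy => div_nonneg (hf.2.1 y hy) (hg_pos y hy).le) _

def sampleCone (x : ℕ → ℝ²) (n : ℕ) : Set ℝ² :=
  Ioi (0 : ℝ) • (Sreg ∩ x '' Iio n)

lemma measurableSet_sampleCone : MeasurableSet (sampleCone x n) :=
  measurableSet_Ioi_smul_of_finite (((finite_Iio n).image x).inter_of_right Sreg)
    fun h => zero_notMem_Sreg h.1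

lemma mem_sampleCone_iff (hx : ∀ i < n, ∀ j < n, i ≠ j → cross (x i) (x j) ≠ 0) {i : ℕ}
    (hi : i < n) : x i ∈ sampleCone x n ↔ x i ∈ Sreg := by
  refine ⟨?_, fun hS => ⟨1, mem_Ioi.mpr one_pos, x i, ⟨hS, i, hi, rfl⟩, one_smul ℝ _⟩⟩
  rintro ⟨t, -, _, ⟨hS, j, hj, rfl⟩, hji⟩
  obtain rfl | hne := eq_or_ne j i
  · exact hS
  · exact absurd (hji ▸ cross_self_smul (x j) t) (hx j hj i hi hne)

/-- Restricting `f` to `sampleCone` kills its values at the samples outside `S` (no two samples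
are collinear with the origin); dividing by the empirical mass in `hT` and multiplying by `n`
then makes both empirical averages equal to `1`. -/
lemma isGreatest_one_sampleValues (hg_pos : ∀ y ∈ domX, 0 < g y)
    (hx : ∀ i < n, ∀ j < n, i ≠ j → cross (x i) (x j) ≠ 0) {f : ℝ² → ℝ} (hf : f ∈ Fclass α M)
    (hT : 0 < ∑ i ∈ Finset.range n, Sreg.indicator (fun y => f y / g y) (x i))
    (hTn : 2 ≤ α → n ≤ ∑ i ∈ Finset.range n, Sreg.indicator (fun y => f y / g y) (x i)) :
    IsGreatest (sampleValues α M g x n) 1 := by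
  set T := ∑ i ∈ Finset.range n, Sreg.indicator (fun y => f y / g y) (x i) with hT_def
  have hn : (n : ℝ) ≠ 0 := by
    intro hn
    rw [Nat.cast_eq_zero.mp hn, Finset.sum_range_zero] at hT_def
    exact hT.ne' hT_def
  set F := fun y => n / T * (sampleCone x n).indicator f y
  have hF : F ∈ Fclass α M :=
    const_mul_mem_Fclass (indicator_mem_Fclass measurableSet_sampleCone
      (fun _ ht _ => smul_mem_Ioi_smul_iff ht _) hf) (by positivity)
      fun hα => (div_le_one hT).mpr (hTn hα)
  have hsample : ∀ D, Sreg ⊆ D → ∀ i ∈ Finset.range n,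
      D.indicator (fun y => F y / g y) (x i) =
        n / T * Sreg.indicator (fun y => f y / g y) (x i) := by
    intro D hD i hi
    have hi := Finset.mem_range.mp hi
    by_cases hS : x i ∈ Sreg
    · simp only [F, indicator_of_mem (hD hS), indicator_of_mem hS,
        indicator_of_mem ((mem_sampleCone_iff hx hi).mpr hS), mul_div_assoc]
    · simp [F, indicator_of_notMem hS, indicator_of_notMem (mt (mem_sampleCone_iff hx hi).mp hS)]
  have hsum : ∀ D, Sreg ⊆ D →
      (1 / n : ℝ) * ∑ i ∈ Finset.range n, D.indicator (fun y => F y / g y) (x i) = 1 := by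
    intro D hD
    rw [Finset.sum_congr rfl (hsample D hD), ← Finset.mul_sum, ← hT_def]
    field_simp
  refine ⟨⟨_, ⟨F, hF, rfl⟩, hsum domX Sreg_subset_domX, (hsum Sreg subset_rfl).symm⟩,
    fun r hr => le_one_of_mem_sampleValues hg_pos hr⟩

end SampleProblem

def quarterAnnulus : Set (ℝ × ℝ) := {q | 0 ≤ q.1 ∧ 0 ≤ q.2 ∧ q.1 ^ 2 + q.2 ^ 2 ∈ Icc 1 4}

lemma polarCoord_symm_mem_quarterAnnulus_iff {p : ℝ × ℝ} (hp : p ∈ polarCoord.target) :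
    polarCoord.symm p ∈ quarterAnnulus ↔ p ∈ Icc 1 2 ×ˢ Icc 0 (Real.pi / 2) := by
  obtain ⟨r, θ⟩ := p
  simp only [polarCoord_target, mem_prod, mem_Ioi, mem_Ioo] at hp
  obtain ⟨hr, hθ₁, hθ₂⟩ := hp
  have hsq : (r * Real.cos θ) ^ 2 + (r * Real.sin θ) ^ 2 = r ^ 2 := by
    linear_combination r ^ 2 * Real.cos_sq_add_sin_sq θ
  simp only [quarterAnnulus, polarCoord_symm_apply, mem_ofPred_eq, hsq, mem_prod, mem_Icc,
    mul_nonneg_iff_of_pos_left hr]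
  have hr_iff : (1 ≤ r ^ 2 ∧ r ^ 2 ≤ 4) ↔ (1 ≤ r ∧ r ≤ 2) := by
    constructor <;> rintro ⟨h₁, h₂⟩ <;> constructor <;> nlinarith
  have hθ_iff : (0 ≤ Real.cos θ ∧ 0 ≤ Real.sin θ) ↔ (0 ≤ θ ∧ θ ≤ Real.pi / 2) := by
    constructor
    · rintro ⟨hc, hs⟩
      exact ⟨by_contra fun h => (Real.sin_neg_of_neg_of_neg_pi_lt (not_le.mp h) hθ₁).not_ge hs,
        by_contra fun h =>
          (Real.cos_neg_of_pi_div_two_lt_of_lt (not_le.mp h) (by linarith)).not_ge hc⟩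
    · rintro ⟨h₀, h₁⟩
      exact ⟨Real.cos_nonneg_of_mem_Icc ⟨by linarith, h₁⟩,
        Real.sin_nonneg_of_nonneg_of_le_pi h₀ (by linarith)⟩
  rw [← hr_iff, ← hθ_iff]
  tauto

lemma volume_quarterAnnulus : volume quarterAnnulus = ENNReal.ofReal (3 * Real.pi / 4) := by
  set B : Set (ℝ × ℝ) := Icc 1 2 ×ˢ Icc 0 (Real.pi / 2)
  have hA : MeasurableSet quarterAnnulus := by unfold quarterAnnulus; measurability
  have hB : B ⊆ polarCoord.target := fun p hp => by
    simp only [B, mem_prod, mem_Icc] at hp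
    simp only [polarCoord_target, mem_prod, mem_Ioi, mem_Ioo]
    exact ⟨by linarith, by linarith [Real.pi_pos], by linarith [Real.pi_pos]⟩
  have hpolar : EqOn (fun p => ENNReal.ofReal p.1 • quarterAnnulus.indicator 1 (polarCoord.symm p))
      (B.indicator fun p => ENNReal.ofReal p.1) polarCoord.target := fun p hp => by
    dsimp only
    by_cases hpB : p ∈ B
    · rw [indicator_of_mem hpB, indicator_of_mem
        ((polarCoord_symm_mem_quarterAnnulus_iff hp).mpr hpB), Pi.one_apply, smul_eq_mul, mul_one]
    · rw [indicator_of_notMem hpB, indicator_of_notMem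
        (mt (polarCoord_symm_mem_quarterAnnulus_iff hp).mp hpB), smul_zero]
  calc volume quarterAnnulus = ∫⁻ p, quarterAnnulus.indicator 1 p :=
        (lintegral_indicator_one hA).symm
    _ = ∫⁻ p in B, ENNReal.ofReal p.1 := by
      rw [← lintegral_comp_polarCoord_symm, setLIntegral_congr_fun
        polarCoord.open_target.measurableSet hpolar, setLIntegral_indicator
        (measurableSet_Icc.prod measurableSet_Icc), inter_eq_left.mpr hB]
    _ = (∫⁻ r in Icc (1 : ℝ) 2, ENNReal.ofReal r) * volume (Icc 0 (Real.pi / 2)) := by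
      rw [Measure.volume_eq_prod, ← Measure.prod_restrict, ← setLIntegral_one,
        ← lintegral_prod_mul (by fun_prop) aemeasurable_const]
      simp
    _ = ENNReal.ofReal (3 * Real.pi / 4) := by
      rw [← ofReal_integral_eq_lintegral_ofReal, integral_Icc_eq_integral_Ioc,
        ← intervalIntegral.integral_of_le one_le_two, integral_id, Real.volume_Icc,
        ← ENNReal.ofReal_mul (by norm_num)]
      · congr 1; ring
      · exact continuous_id.integrableOn_Icc
      · exact ae_restrict_of_forall_mem measurableSet_Icc fun r hr => zero_le_one.trans hr.1

lemma volume_Sreg : volume Sreg = ENNReal.ofReal (3 * Real.pi / 4) := by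
  have he : MeasurePreserving (fun x : ℝ² => (x 0, x 1)) :=
    (volume_preserving_finTwoArrow ℝ).comp
      (EuclideanSpace.volume_preserving_symm_measurableEquiv_toLp (Fin 2))
  have hS : Sreg = (fun x : ℝ² => (x 0, x 1)) ⁻¹' quarterAnnulus := by
    ext x
    have hnorm : ‖x‖ ^ 2 = x 0 ^ 2 + x 1 ^ 2 := by
      simp [EuclideanSpace.real_norm_sq_eq, Fin.sum_univ_two]
    have h1 : 1 ≤ ‖x‖ ↔ 1 ≤ ‖x‖ ^ 2 := by
      rw [one_le_sq_iff_one_le_abs, abs_norm]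
    have h2 : ‖x‖ ≤ 2 ↔ ‖x‖ ^ 2 ≤ 2 ^ 2 :=
      (pow_le_pow_iff_left₀ (norm_nonneg x) zero_le_two two_ne_zero).symm
    simp only [Sreg, quarterAnnulus, mem_preimage, mem_ofPred_eq, Fin.forall_fin_two, mem_Icc,
      h1, h2, hnorm]
    norm_num [and_assoc]
  rw [hS, he.measure_preimage (by unfold quarterAnnulus; measurability), volume_quarterAnnulus]

lemma volume_real_Sreg : volume.real Sreg = 3 * Real.pi / 4 := by
  rw [measureReal_def, volume_Sreg, ENNReal.toReal_ofReal (by positivity)]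

lemma isCompact_Sreg : IsCompact Sreg := by
  refine Metric.isCompact_of_isClosed_isBounded ?_
    (Metric.isBounded_closedBall.subset fun x hx => mem_closedBall_zero_iff.mpr hx.2.2)
  have hS : Sreg = (⋂ i, {x : ℝ² | 0 ≤ x i}) ∩ (‖·‖) ⁻¹' Icc 1 2 := by
    ext x; simp [Sreg, and_assoc]
  rw [hS]
  exact (isClosed_iInter fun i => isClosed_le continuous_const (by fun_prop)).inter
    (isClosed_Icc.preimage continuous_norm)

lemma integrableOn_rpow_norm_Sreg (β : ℝ) : IntegrableOn (fun x => ‖x‖ ^ β) Sreg :=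
  ContinuousOn.integrableOn_compact isCompact_Sreg fun _ hx =>
    (continuous_norm.continuousAt.rpow_const
      (Or.inl (zero_lt_one.trans_le hx.2.1).ne')).continuousWithinAt

lemma setIntegral_rpow_norm_Sreg_pos (β : ℝ) : 0 < ∫ x in Sreg, ‖x‖ ^ β := by
  have hsupp : Function.support (fun x : ℝ² => ‖x‖ ^ β) ∩ Sreg = Sreg :=
    inter_eq_right.mpr fun x hx => (Real.rpow_pos_of_pos (zero_lt_one.trans_le hx.2.1) β).ne'
  rw [setIntegral_pos_iff_support_of_nonneg_ae (ae_of_all _ fun _ => by positivity)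
    (integrableOn_rpow_norm_Sreg β), hsupp, volume_Sreg]
  simp [Real.pi_pos]

lemma one_lt_setIntegral_Sreg_const {M : ℝ} (hM : 4 / (3 * Real.pi) < M) :
    1 < ∫ _ in Sreg, M := by
  rw [setIntegral_const, volume_real_Sreg, smul_eq_mul, ← div_lt_iff₀' (by positivity)]
  simpa [div_div_eq_mul_div] using hM

lemma ae_tendsto_average_comp {Ω E : Type*} [MeasurableSpace Ω] [MeasurableSpace E]
    {P : Measure Ω} {μ : Measure E} {X : ℕ → Ω → E} (hX_meas : ∀ i, Measurable (X i))
    (hX_indep : iIndepFun X P) (hX_law : ∀ i, P.map (X i) = μ) {φ : E → ℝ}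
    (hφ : Measurable φ) (hφ_int : Integrable φ μ) :
    ∀ᵐ ω ∂P, Tendsto (fun n : ℕ => (n : ℝ)⁻¹ * ∑ i ∈ Finset.range n, φ (X i ω)) atTop
      (𝓝 (∫ y, φ y ∂μ)) := by
  have hident : ∀ i, IdentDistrib (X i) (X 0) P P := fun i =>
    ⟨(hX_meas i).aemeasurable, (hX_meas 0).aemeasurable, (hX_law i).trans (hX_law 0).symm⟩
  have hint : Integrable (φ ∘ X 0) P :=
    (integrable_map_measure hφ.aestronglyMeasurable (hX_meas 0).aemeasurable).mp
      (hX_law 0 ▸ hφ_int)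
  have hmean : ∫ ω, φ (X 0 ω) ∂P = ∫ y, φ y ∂μ := by
    rw [← hX_law 0, integral_map (hX_meas 0).aemeasurable hφ.aestronglyMeasurable]
  simpa [hmean] using strong_law_ae (fun i => φ ∘ X i) hint
    (fun i j hij => (hX_indep.comp (fun _ => φ) fun _ => hφ).indepFun hij)
    (fun i => (hident i).comp hφ)

lemma toReal_ofReal_smul_indicator_div_ae_eq {E : Type*} [MeasurableSpace E] {μ : Measure E}
    {s t : Set E} {g h : E → ℝ} (hg_pos : ∀ x ∈ t, 0 < g x) (ht : MeasurableSet t) :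
    (fun x => (ENNReal.ofReal (g x)).toReal • s.indicator (fun x => h x / g x) x)
      =ᵐ[μ.restrict t] s.indicator h := by
  refine ae_restrict_of_forall_mem ht fun x hx => ?_
  by_cases hxs : x ∈ s
  · simp [indicator_of_mem hxs, ENNReal.toReal_ofReal (hg_pos x hx).le,
      mul_div_cancel₀ _ (hg_pos x hx).ne']
  · simp [indicator_of_notMem hxs]

lemma integrable_indicator_div_withDensity {E : Type*} [MeasurableSpace E] {μ : Measure E}
    {s t : Set E} {g h : E → ℝ} (hg : Measurable g) (hg_pos : ∀ x ∈ t, 0 < g x)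
    (hs : MeasurableSet s) (ht : MeasurableSet t) (hh : IntegrableOn h s μ) :
    Integrable (s.indicator fun x => h x / g x)
      ((μ.restrict t).withDensity fun x => ENNReal.ofReal (g x)) := by
  rw [integrable_withDensity_iff_integrable_smul' (by fun_prop)
    (ae_of_all _ fun _ => ENNReal.ofReal_lt_top)]
  refine Integrable.congr ?_ (toReal_ofReal_smul_indicator_div_ae_eq hg_pos ht).symm
  exact (integrable_indicator_iff hs).mpr (hh.mono_measure Measure.restrict_le_self)

lemma integral_indicator_div_withDensity {E : Type*} [MeasurableSpace E] {μ : Measure E}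
    {s t : Set E} {g h : E → ℝ} (hg : Measurable g) (hg_pos : ∀ x ∈ t, 0 < g x)
    (hs : MeasurableSet s) (ht : MeasurableSet t) (hst : s ⊆ t) :
    ∫ x, s.indicator (fun x => h x / g x) x
      ∂((μ.restrict t).withDensity fun x => ENNReal.ofReal (g x)) = ∫ x in s, h x ∂μ := by
  rw [integral_withDensity_eq_integral_toReal_smul (by fun_prop)
    (ae_of_all _ fun _ => ENNReal.ofReal_lt_top), integral_congr_ae
    (toReal_ofReal_smul_indicator_div_ae_eq hg_pos ht), integral_indicator hs,
    Measure.restrict_restrict hs, inter_eq_left.mpr hst]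

section Sampling

variable {Ω : Type*} [MeasurableSpace Ω] {P : Measure Ω} {g : ℝ² → ℝ} {X : ℕ → Ω → ℝ²}

lemma ae_pairwise_cross_ne_zero [IsFiniteMeasure P] (hX_meas : ∀ i, Measurable (X i))
    (hX_indep : iIndepFun X P) (hX_ac : ∀ i, P.map (X i) ≪ volume) :
    ∀ᵐ ω ∂P, ∀ i j, i ≠ j → cross (X i ω) (X j ω) ≠ 0 := by
  refine ae_all_iff.mpr fun i => ae_all_iff.mpr fun j => ?_
  rcases eq_or_ne i j with rfl | hij
  · exact ae_of_all _ fun _ h => absurd rfl h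
  · filter_upwards [ae_cross_ne_zero_of_indepFun (hX_meas i) (hX_meas j)
      (hX_indep.indepFun hij) (hX_ac i) (hX_ac j)] with ω hω using fun _ => hω

lemma ae_eventually_lt_sum (hg_meas : Measurable g) (hg_pos : ∀ x ∈ domX, 0 < g x)
    (hX_meas : ∀ i, Measurable (X i)) (hX_indep : iIndepFun X P)
    (hX_law : ∀ i, P.map (X i) = (volume.restrict domX).withDensity fun x => ENNReal.ofReal (g x))
    {h : ℝ² → ℝ} (hh_meas : Measurable h) (hh_int : IntegrableOn h Sreg) {a : ℝ}
    (ha : a < ∫ x in Sreg, h x) :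
    ∀ᵐ ω ∂P, ∀ᶠ n : ℕ in atTop,
      n * a < ∑ i ∈ Finset.range n, Sreg.indicator (fun y => h y / g y) (X i ω) := by
  have hlim := ae_tendsto_average_comp hX_meas hX_indep hX_law
    (φ := Sreg.indicator fun y => h y / g y) ((hh_meas.div hg_meas).indicator measurableSet_Sreg)
    (integrable_indicator_div_withDensity hg_meas hg_pos measurableSet_Sreg measurableSet_domX
      hh_int)
  filter_upwards [hlim] with ω hω
  rw [integral_indicator_div_withDensity hg_meas hg_pos measurableSet_Sreg measurableSet_domX
    Sreg_subset_domX] at hω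
  filter_upwards [hω.eventually (eventually_gt_nhds ha), eventually_gt_atTop 0] with n hn hn0
  rwa [inv_mul_eq_div, lt_div_iff₀ (by positivity), mul_comm] at hn

lemma ae_eventually_valPαn_eq_one [IsFiniteMeasure P] (hg_meas : Measurable g)
    (hg_pos : ∀ x ∈ domX, 0 < g x) (hX_meas : ∀ i, Measurable (X i)) (hX_indep : iIndepFun X P)
    (hX_law : ∀ i, P.map (X i) = (volume.restrict domX).withDensity fun x => ENNReal.ofReal (g x))
    {α M : ℝ} {h : ℝ² → ℝ} (hh : h ∈ Fclass α M) (hh_int : IntegrableOn h Sreg)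
    {a : ℝ} (ha₀ : 0 ≤ a) (ha₁ : 2 ≤ α → 1 ≤ a) (ha : a < ∫ x in Sreg, h x) :
    ∀ᵐ ω ∂P, ∃ N0 : ℕ, ∀ n ≥ N0, valPαn α M g X n ω = 1 := by
  have hX_ac : ∀ i, P.map (X i) ≪ volume := fun i => hX_law i ▸
    (withDensity_absolutelyContinuous _ _).trans Measure.absolutelyContinuous_restrict
  filter_upwards [ae_eventually_lt_sum hg_meas hg_pos hX_meas hX_indep hX_law hh.1 hh_int ha,
    ae_pairwise_cross_ne_zero hX_meas hX_indep hX_ac] with ω hsum hcross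
  obtain ⟨N0, hN0⟩ := eventually_atTop.mp hsum
  refine ⟨N0, fun n hn => ?_⟩
  have hlt := hN0 n hn
  have hna : (0 : ℝ) ≤ n * a := by positivity
  rw [valPαn_eq_sSup_sampleValues]
  exact (isGreatest_one_sampleValues hg_pos (fun i _ j _ hij => hcross i j hij) hh
    (hna.trans_lt hlt)
    fun hα => (le_mul_of_one_le_right n.cast_nonneg (ha₁ hα)).trans hlt.le).csSup_eq

end Sampling

section Population

variable {α : ℝ} {f : ℝ² → ℝ}

lemma mem_inv_two_smul_domX {x : ℝ²} :
    x ∈ (2⁻¹ : ℝ) • domX ↔ (∀ i, 0 ≤ x i) ∧ ‖x‖ ≤ 1 := by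
  rw [mem_smul_set_iff_inv_smul_mem₀ (by norm_num), inv_inv]
  simp only [domX, mem_ofPred_eq, PiLp.smul_apply, smul_eq_mul, norm_smul, Real.norm_two]
  constructor <;> rintro ⟨h₁, h₂⟩ <;> refine ⟨fun i => ?_, by linarith⟩ <;> linarith [h₁ i]

lemma inv_two_smul_domX_subset : (2⁻¹ : ℝ) • domX ⊆ domX := fun x hx => by
  obtain ⟨h₁, h₂⟩ := mem_inv_two_smul_domX.mp hx
  exact ⟨h₁, by linarith⟩

lemma rpow_neg_mul_setIntegral_le (hf : AlphaUnimodal α f) (hf_int : IntegrableOn f domX) :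
    2 ^ (-α) * ∫ x in domX, f x ≤ ∫ x in (2⁻¹ : ℝ) • domX, f x := by
  have hcomp : IntegrableOn (fun y => f ((2⁻¹ : ℝ) • y)) domX := by
    have h := (integrable_comp_smul_iff volume (((2⁻¹ : ℝ) • domX).indicator f)
      (inv_ne_zero two_ne_zero)).mpr
      ((integrable_indicator_iff (measurableSet_domX.const_smul₀ _)).mpr
        (hf_int.mono_set inv_two_smul_domX_subset))
    rw [← integrable_indicator_iff measurableSet_domX]
    refine h.congr (ae_of_all _ fun y => ?_)
    have hiff := smul_mem_smul_set_iff₀ (inv_ne_zero (two_ne_zero' ℝ)) domX y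
    show ((2⁻¹ : ℝ) • domX).indicator f ((2⁻¹ : ℝ) • y) =
      domX.indicator (fun y => f ((2⁻¹ : ℝ) • y)) y
    by_cases hy : y ∈ domX
    · rw [indicator_of_mem hy, indicator_of_mem (hiff.mpr hy)]
    · rw [indicator_of_notMem hy, indicator_of_notMem (mt hiff.mp hy)]
  have hpoint : ∀ᵐ y ∂volume.restrict domX, 2 ^ (2 - α) * f y ≤ f ((2⁻¹ : ℝ) • y) := by
    filter_upwards [ae_restrict_mem measurableSet_domX,
      ae_restrict_of_ae (Measure.ae_ne volume 0)] with y hy hy0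
    have h := hf y hy0 2⁻¹ 1 (by norm_num) (by norm_num)
      (inv_two_smul_domX_subset (smul_mem_smul_set hy)) ((one_smul ℝ y).symm ▸ hy)
    rw [Real.one_rpow, one_mul, one_smul, Real.inv_rpow zero_le_two] at h
    rwa [le_inv_mul_iff₀ (by positivity)] at h
  calc 2 ^ (-α) * ∫ x in domX, f x = 4⁻¹ * ∫ x in domX, 2 ^ (2 - α) * f x := by
        rw [integral_const_mul, ← mul_assoc, sub_eq_add_neg, Real.rpow_add two_pos, Real.rpow_two]
        ring
    _ ≤ 4⁻¹ * ∫ x in domX, f ((2⁻¹ : ℝ) • x) := by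
        refine mul_le_mul_of_nonneg_left ?_ (by norm_num)
        exact setIntegral_mono_ae_restrict (hf_int.const_mul _) hcomp hpoint
    _ = ∫ x in (2⁻¹ : ℝ) • domX, f x := by
        rw [Measure.setIntegral_comp_smul_of_pos _ _ _ (by norm_num), finrank_euclideanSpace_fin,
          smul_eq_mul, ← mul_assoc, show (4 : ℝ)⁻¹ * ((2 : ℝ)⁻¹ ^ 2)⁻¹ = 1 by norm_num, one_mul]

lemma setIntegral_Sreg_le (hf : AlphaUnimodal α f) (hf_int : IntegrableOn f domX) :
    ∫ x in Sreg, f x ≤ (1 - 2 ^ (-α)) * ∫ x in domX, f x := by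
  have hunion : Sreg ∪ (2⁻¹ : ℝ) • domX = domX := by
    ext x
    rw [mem_union, mem_inv_two_smul_domX]
    simp only [Sreg, domX, mem_ofPred_eq]
    constructor
    · rintro (⟨h₀, -, h₂⟩ | ⟨h₀, h₁⟩)
      exacts [⟨h₀, h₂⟩, ⟨h₀, by linarith⟩]
    · rintro ⟨h₀, h₂⟩
      exact (le_total 1 ‖x‖).imp (fun h₁ => ⟨h₀, h₁, h₂⟩) fun h₁ => ⟨h₀, h₁⟩
  have hdisj : AEDisjoint volume Sreg ((2⁻¹ : ℝ) • domX) := by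
    refine measure_mono_null (fun x ⟨hS, hD⟩ => ?_) (Measure.addHaar_sphere volume 0 1)
    rw [mem_sphere_zero_iff_norm]
    exact le_antisymm (mem_inv_two_smul_domX.mp hD).2 hS.2.1
  have hsplit := setIntegral_union₀ hdisj (measurableSet_domX.const_smul₀ _).nullMeasurableSet
    (hf_int.mono_set Sreg_subset_domX) (hf_int.mono_set inv_two_smul_domX_subset)
  rw [hunion] at hsplit
  linarith [rpow_neg_mul_setIntegral_le hf hf_int]

lemma valPα_le (hα : 0 ≤ α) (M : ℝ) : valPα α M ≤ 1 - 2 ^ (-α) := by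
  refine Real.sSup_le ?_ (sub_nonneg.mpr
    (Real.rpow_le_one_of_one_le_of_nonpos one_le_two (neg_nonpos.mpr hα)))
  rintro _ ⟨f, ⟨-, -, hf, -⟩, hf_one, rfl⟩
  have hf_int : IntegrableOn f domX := Integrable.of_integral_ne_zero (hf_one ▸ one_ne_zero)
  simpa [hf_one] using setIntegral_Sreg_le hf hf_int

end Population

theorem alpha_unimodal_inconsistency_general
    (α : ℝ) (hα : 0 < α) (M : ℝ) (hM : 2 ≤ α → 4 / (3 * Real.pi) < M)
    (g : EuclideanSpace ℝ (Fin 2) → ℝ) (hg_meas : Measurable g)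
    (hg_pos : ∀ x ∈ domX, 0 < g x)
    {Ω : Type*} [MeasurableSpace Ω] (P : Measure Ω) [IsProbabilityMeasure P]
    (X : ℕ → Ω → EuclideanSpace ℝ (Fin 2)) (hX_meas : ∀ i, Measurable (X i))
    (hX_indep : ProbabilityTheory.iIndepFun X P)
    (hX_law : ∀ i, Measure.map (X i) P
      = (volume.restrict domX).withDensity fun x => ENNReal.ofReal (g x)) :
    P {ω | ¬ ∃ N0 : ℕ, ∀ n ≥ N0, valPαn α M g X n ω = 1} = 0 ∧
    valPα α M ≤ ((2 : ℝ) ^ α - 1) / (2 : ℝ) ^ α ∧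
    ((2 : ℝ) ^ α - 1) / (2 : ℝ) ^ α < 1 ∧
    P {ω | Tendsto (fun n => valPαn α M g X n ω) atTop (nhds (valPα α M))} = 0 := by
  have hbound : ((2 : ℝ) ^ α - 1) / 2 ^ α = 1 - 2 ^ (-α) := by
    rw [Real.rpow_neg zero_le_two]
    field_simp
  have hval : valPα α M ≤ 1 - 2 ^ (-α) := valPα_le hα.le M
  have hlt : 1 - (2 : ℝ) ^ (-α) < 1 := sub_lt_self 1 (by positivity)
  have hev : ∀ᵐ ω ∂P, ∃ N0 : ℕ, ∀ n ≥ N0, valPαn α M g X n ω = 1 := by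
    rcases lt_or_ge α 2 with hα2 | hα2
    · exact ae_eventually_valPαn_eq_one hg_meas hg_pos hX_meas hX_indep hX_law
        (rpow_norm_mem_Fclass hα2) (integrableOn_rpow_norm_Sreg _) le_rfl
        (fun h => absurd h hα2.not_ge) (setIntegral_rpow_norm_Sreg_pos _)
    · have hM' := hM hα2
      exact ae_eventually_valPαn_eq_one hg_meas hg_pos hX_meas hX_indep hX_law
        (const_mem_Fclass hα2 ((by positivity : (0 : ℝ) ≤ 4 / (3 * Real.pi)).trans hM'.le))
        (integrableOn_const isCompact_Sreg.measure_lt_top.ne) zero_le_one (fun _ => le_rfl)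
        (one_lt_setIntegral_Sreg_const hM')
  refine ⟨hev, hbound ▸ hval, hbound ▸ hlt, measure_mono_null (fun ω hconv => ?_) hev⟩
  rintro ⟨N0, hN0⟩
  have hone : valPα α M = 1 := tendsto_nhds_unique hconv <| tendsto_const_nhds.congr'
    (eventually_atTop.mpr ⟨N0, fun n hn => (hN0 n hn).symm⟩)
  linarith

/-- **Lack of consistency of IW-SAA for α-unimodality**: for any positive
sampling density `g` on `𝒳`, almost surely (outer measure) eventually
`val(P_{α,n}) = 1`; since `val(P_α) ≤ (2^α - 1)/2^α < 1`, the IW-SAA optimal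
value almost surely does not converge to `val(P_α)`. -/
theorem alpha_unimodal_inconsistency
    (α : ℝ) (hα : 0 < α) (M : ℝ) (hM : 2 ≤ α → 4 / (3 * Real.pi) < M)
    (g : EuclideanSpace ℝ (Fin 2) → ℝ) (hg_meas : Measurable g)
    (hg_pos : ∀ x ∈ domX, 0 < g x) (hg_prob : ∫ x in domX, g x = 1)
    {Ω : Type*} [MeasurableSpace Ω] (P : Measure Ω) [IsProbabilityMeasure P]
    (X : ℕ → Ω → EuclideanSpace ℝ (Fin 2)) (hX_meas : ∀ i, Measurable (X i))
    (hX_indep : ProbabilityTheory.iIndepFun X P)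
    (hX_law : ∀ i, Measure.map (X i) P
      = (volume.restrict domX).withDensity fun x => ENNReal.ofReal (g x)) :
    P {ω | ¬ ∃ N0 : ℕ, ∀ n ≥ N0, valPαn α M g X n ω = 1} = 0 ∧
    valPα α M ≤ ((2 : ℝ) ^ α - 1) / (2 : ℝ) ^ α ∧
    ((2 : ℝ) ^ α - 1) / (2 : ℝ) ^ α < 1 ∧
    P {ω | Tendsto (fun n => valPαn α M g X n ω) atTop (nhds (valPα α M))} = 0 :=
  alpha_unimodal_inconsistency_general α hα M hM g hg_meas hg_pos P X hX_meas hX_indep hX_law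

end AlphaUnimodalDRO
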